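/- arXiv:1604.01743 — 3 statements merged into one kernel-verified Lean document; each statement's English description precedes it below -/
import Mathlib

section
/- Let E be an AL-space, (T_t)_{t∈J} a bounded positive semigroup (J = ℕ or (0,∞)), and ε > 0. Then the following are equivalent: (i) (T_t) converges strongly to an operator P with ‖Pf‖ ≥ ε‖f‖ for all f ∈ E₊; (ii) for every normalised f ∈ E₊ there is an individual lower bound h_f for (T,f) with ‖h_f‖ ≥ ε. -/
/-!
If `T_t f → Pf`, then `Pf` itself is an individual lower bound for `(T, f)`. Conversely, rescaling
gives every `g ≥ 0` a lower bound of norm `≥ ε‖g‖`. The lower bounds of `g` are closed under `⊔`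
and under limits and have bounded norms; since the norm is additive on the positive cone, there is
a greatest one `q`. Then `T_s q ≤ q`, so the orbit of `q` decreases to a fixed lower bound `p` of
`g`, and `‖p‖ ≥ ε ‖q‖ ≥ ε² ‖g‖`.

Let `N = limsup ‖T_t f‖`. A fixed vector `b` that is a lower bound of `T_t f` up to an error `d`
can be enlarged by a fixed lower bound of `(T_s f - b)⁺`, taken at a time `s` where
`‖T_s f‖ ≈ N`: the norm grows by `ε² (N - ‖b‖)` while the error becomes at most `M d + σ`,
where `M` bounds `‖T_t‖`.
Letting the error tend to zero gives fixed approximate lower bounds of norm close to `N`, and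
`‖T_t f - b‖ = ‖T_t f‖ - ‖b‖ + 2 ‖(T_t f - b)⁻‖` then makes the orbit Cauchy.
-/

open Filter Topology Set Function

section LatticeGroup

variable {E : Type*} [AddCommGroup E] [Lattice E] [IsOrderedAddMonoid E]

theorem negPart_sub_le_negPart_add {a b : E} (hb : 0 ≤ b) : (a - b)⁻ ≤ a⁻ + b := by
  rw [negPart_def (a - b), neg_sub, sub_eq_add_neg, add_comm]
  exact sup_le (add_le_add_left (neg_le_negPart a) b) (add_nonneg (negPart_nonneg a) hb)

theorem negPart_map_le {F : Type*} [FunLike F E E] [AddMonoidHomClass F E E] {A : F}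
    (hA : ∀ x, 0 ≤ x → 0 ≤ A x) (x : E) : (A x)⁻ ≤ A x⁻ := by
  refine sup_le ?_ (hA _ (negPart_nonneg x))
  exact neg_le_iff_add_nonneg.2 (by simpa using hA _ (sub_nonneg.2 (neg_le_negPart x)))

end LatticeGroup

section NormedLattice

variable {E : Type*} [NormedAddCommGroup E] [Lattice E] [HasSolidNorm E] [IsOrderedAddMonoid E]

theorem norm_le_norm_of_nonneg_of_le {a b : E} (ha : 0 ≤ a) (hab : a ≤ b) : ‖a‖ ≤ ‖b‖ :=
  norm_le_norm_of_abs_le_abs <| by rwa [abs_of_nonneg ha, abs_of_nonneg (ha.trans hab)]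

theorem norm_negPart_le (a : E) : ‖a⁻‖ ≤ ‖a‖ := by
  simpa using lipschitzWith_negPart.dist_le_mul a 0

theorem norm_negPart_le_add (a b : E) : ‖a⁻‖ ≤ ‖b⁻‖ + ‖a - b‖ := by
  have := lipschitzWith_negPart.dist_le_mul a b
  rw [NNReal.coe_one, one_mul, dist_eq_norm, dist_eq_norm] at this
  linarith [norm_sub_norm_le a⁻ b⁻]

theorem norm_le_norm_add_norm_negPart_sub {b : E} (hb : 0 ≤ b) (x : E) :
    ‖b‖ ≤ ‖x‖ + ‖(x - b)⁻‖ := by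
  have : b ≤ x + (x - b)⁻ := sub_le_iff_le_add'.1 <| by simpa using neg_le_negPart (x - b)
  exact (norm_le_norm_of_nonneg_of_le hb this).trans (norm_add_le _ _)

variable [NormedSpace ℝ E]

/-- The scalar action is not assumed to be compatible with the order: positivity of `c • x` comes
from `0 ≤ 2 • y → 0 ≤ y` (dyadic `c`) and the closedness of the positive cone. -/
theorem smul_nonneg_of_hasSolidNorm {c : ℝ} (hc : 0 ≤ c) {x : E} (hx : 0 ≤ x) : 0 ≤ c • x := by
  have dyadic : ∀ n : ℕ, 0 ≤ ((2 : ℝ) ^ n)⁻¹ • x := by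
    intro n
    induction n with
    | zero => simpa using hx
    | succ n ih =>
      refine nsmul_two_semiclosed ?_
      rw [← Nat.cast_smul_eq_nsmul ℝ, smul_smul]
      convert ih using 2
      push_cast
      ring
  have approx : Tendsto (fun n : ℕ => (⌊c * 2 ^ n⌋₊ : ℝ) * ((2 : ℝ) ^ n)⁻¹) atTop (𝓝 c) := by
    have hpow : Tendsto (fun n : ℕ => ((2 : ℝ) ^ n)⁻¹) atTop (𝓝 0) :=
      tendsto_inv_atTop_zero.comp (tendsto_pow_atTop_atTop_of_one_lt one_lt_two)
    refine tendsto_of_tendsto_of_tendsto_of_le_of_le (by simpa using hpow.const_sub c)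
      tendsto_const_nhds (fun n => ?_) (fun n => ?_)
    all_goals
      have h2 : (0 : ℝ) < 2 ^ n := by positivity
      rw [← div_eq_mul_inv]
    · rw [le_div_iff₀ h2, sub_mul, inv_mul_cancel₀ h2.ne']
      linarith [Nat.lt_floor_add_one (c * 2 ^ n)]
    · exact div_le_of_le_mul₀ h2.le hc (Nat.floor_le (by positivity))
  refine ge_of_tendsto (approx.smul_const x) (Eventually.of_forall fun n => ?_)
  rw [mul_smul, Nat.cast_smul_eq_nsmul]
  exact nsmul_nonneg (dyadic n) _

instance HasSolidNorm.toPosSMulMono : PosSMulMono ℝ E :=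
  PosSMulMono.of_smul_nonneg fun _ hc _ hx => smul_nonneg_of_hasSolidNorm hc hx

theorem negPart_smul_of_pos {c : ℝ} (hc : 0 < c) (x : E) : (c • x)⁻ = c • x⁻ := by
  have := (OrderIso.smulRight (β := E) hc).map_sup (-x) 0
  rw [OrderIso.smulRight_apply, OrderIso.smulRight_apply, OrderIso.smulRight_apply, smul_zero,
    smul_neg] at this
  rw [negPart_def, negPart_def, this]

end NormedLattice

theorem cauchySeq_of_dist_le_dist_norm {E ι : Type*} [SeminormedAddCommGroup E]
    [SemilatticeSup ι] [Nonempty ι] {x : ι → E}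
    (h : ∀ i j, i ≤ j → dist (x j) (x i) ≤ dist ‖x j‖ ‖x i‖) (hc : CauchySeq fun i => ‖x i‖) :
    CauchySeq x := by
  rw [Metric.cauchySeq_iff'] at hc ⊢
  intro ε hε
  obtain ⟨N, hN⟩ := hc ε hε
  exact ⟨N, fun n hn => (h N n hn).trans_lt (hN n hn)⟩

section ALNorm

def IsALNorm (E : Type*) [NormedAddCommGroup E] [Lattice E] : Prop :=
  ∀ f g : E, 0 ≤ f → 0 ≤ g → ‖f + g‖ = ‖f‖ + ‖g‖

variable {E : Type*} [NormedAddCommGroup E] [Lattice E] [IsOrderedAddMonoid E]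

namespace IsALNorm

variable (hAL : IsALNorm E)
include hAL

theorem norm_posPart_sub {a b : E} (ha : 0 ≤ a) (hb : 0 ≤ b) :
    ‖(a - b)⁺‖ = ‖a‖ - ‖b‖ + ‖(a - b)⁻‖ := by
  have h : (a - b)⁺ + b = (a - b)⁻ + a := by
    rw [add_comm _ a, ← sub_eq_sub_iff_add_eq_add, posPart_sub_negPart]
  have := congrArg norm h
  rw [hAL _ _ (posPart_nonneg _) hb, hAL _ _ (negPart_nonneg _) ha] at this
  linarith

variable [HasSolidNorm E]

theorem norm_sub {a b : E} (ha : 0 ≤ a) (hb : 0 ≤ b) :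
    ‖a - b‖ = ‖a‖ - ‖b‖ + 2 * ‖(a - b)⁻‖ := by
  rw [← norm_abs_eq_norm, ← posPart_add_negPart,
    hAL _ _ (posPart_nonneg _) (negPart_nonneg _), hAL.norm_posPart_sub ha hb]
  ring

theorem norm_sub_of_le {a b : E} (ha : 0 ≤ a) (hab : a ≤ b) : ‖b - a‖ = ‖b‖ - ‖a‖ := by
  rw [hAL.norm_sub (ha.trans hab) ha, negPart_eq_zero.2 (sub_nonneg.2 hab), norm_zero]
  ring

variable {ι : Type*} [SemilatticeSup ι] [Nonempty ι] {x : ι → E}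

theorem cauchySeq_of_monotone (hx : Monotone x) (h0 : ∀ i, 0 ≤ x i)
    (hbdd : BddAbove (range fun i => ‖x i‖)) : CauchySeq x := by
  refine cauchySeq_of_dist_le_dist_norm (fun i j hij => ?_) (tendsto_atTop_ciSup
    (fun i j hij => norm_le_norm_of_nonneg_of_le (h0 i) (hx hij)) hbdd).cauchySeq
  rw [dist_eq_norm, hAL.norm_sub_of_le (h0 i) (hx hij), Real.dist_eq]
  exact le_abs_self _

theorem cauchySeq_of_antitone (hx : Antitone x) (h0 : ∀ i, 0 ≤ x i) : CauchySeq x := by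
  refine cauchySeq_of_dist_le_dist_norm (fun i j hij => ?_) (tendsto_atTop_ciInf
    (fun i j hij => norm_le_norm_of_nonneg_of_le (h0 j) (hx hij))
    ⟨0, forall_mem_range.2 fun i => norm_nonneg _⟩).cauchySeq
  rw [dist_eq_norm', hAL.norm_sub_of_le (h0 j) (hx hij), Real.dist_eq, abs_sub_comm]
  exact le_abs_self _

theorem exists_isGreatest [CompleteSpace E] {S : Set E} (hne : S.Nonempty) (hS : ∀ x ∈ S, 0 ≤ x)
    (hsup : SupClosed S) (hcl : IsClosed S) (hbdd : BddAbove (norm '' S)) :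
    ∃ q, IsGreatest S q := by
  obtain ⟨u, -, hu, huS⟩ := exists_seq_tendsto_sSup (hne.image norm) hbdd
  choose x hxS hxu using huS
  have hHS : ∀ n, partialSups x n ∈ S := fun n => by
    rw [partialSups_apply]
    exact hsup.finsetSup'_mem _ fun i _ => hxS i
  have hHle : ∀ n, ‖partialSups x n‖ ≤ sSup (norm '' S) :=
    fun n => le_csSup hbdd (mem_image_of_mem _ (hHS n))
  obtain ⟨q, hq⟩ := cauchySeq_tendsto_of_complete <| hAL.cauchySeq_of_monotone
    (partialSups x).monotone (fun n => hS _ (hHS n)) ⟨_, forall_mem_range.2 hHle⟩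
  have hqS : q ∈ S := hcl.mem_of_tendsto hq (Eventually.of_forall hHS)
  have hnorm : ‖q‖ = sSup (norm '' S) := by
    refine tendsto_nhds_unique hq.norm (tendsto_of_tendsto_of_tendsto_of_le_of_le hu
      tendsto_const_nhds (fun n => ?_) hHle)
    rw [← hxu n]
    exact norm_le_norm_of_nonneg_of_le (hS _ (hxS n)) (le_partialSups x n)
  refine ⟨q, hqS, fun y hy => ?_⟩
  have hle : ‖y ⊔ q‖ ≤ ‖q‖ := hnorm ▸ le_csSup hbdd (mem_image_of_mem _ (hsup hy hqS))
  have hsub := hAL.norm_sub_of_le (hS q hqS) (le_sup_right : q ≤ y ⊔ q)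
  have : y ⊔ q - q = 0 := norm_le_zero_iff.1 (by linarith)
  exact sup_eq_right.1 (sub_eq_zero.1 this)

end IsALNorm

end ALNorm

section TimeDomain

variable {J : Type*} [AddCommMonoid J] [LinearOrder J] [IsOrderedCancelAddMonoid J]
  [ExistsAddOfLE J]

theorem map_const_add_atTop_eq {s : J} (hs : 0 ≤ s) : map (s + ·) atTop = atTop := by
  refine le_antisymm (tendsto_atTop_mono (fun t => le_add_of_nonneg_left hs) tendsto_id)
    fun U hU => ?_
  obtain ⟨a, ha⟩ := mem_atTop_sets.1 hU
  refine mem_atTop_sets.2 ⟨s + a, fun t ht => ?_⟩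
  obtain ⟨c, rfl⟩ := exists_add_of_le ht
  rw [add_assoc]
  exact ha _ (le_add_of_nonneg_right (le_add_iff_nonneg_right _ |>.1 ht))

end TimeDomain

structure IsBoundedPositiveSemigroup {E J : Type*} [NormedAddCommGroup E] [Lattice E]
    [NormedSpace ℝ E] [AddCommMonoid J] [Preorder J] (T : J → E →L[ℝ] E) (M : ℝ) : Prop where
  map_add : ∀ s t, 0 < s → 0 < t → T (s + t) = (T s).comp (T t)
  map_nonneg : ∀ t, 0 < t → ∀ f, 0 ≤ f → 0 ≤ T t f
  norm_le : ∀ t, 0 < t → ‖T t‖ ≤ M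

def IsIndividualLowerBound {E J : Type*} [NormedAddCommGroup E] [Lattice E] [NormedSpace ℝ E]
    [Preorder J] (T : J → E →L[ℝ] E) (f h : E) : Prop :=
  0 ≤ h ∧ Tendsto (fun t => ‖(T t f - h)⁻‖) atTop (𝓝 0)

def HasFixedLowerBounds {E J : Type*} [NormedAddCommGroup E] [Lattice E] [NormedSpace ℝ E]
    [Zero J] [Preorder J] (T : J → E →L[ℝ] E) (c : ℝ) : Prop :=
  ∀ g : E, 0 ≤ g → ∃ p, IsIndividualLowerBound T g p ∧ (∀ t, 0 < t → IsFixedPt (T t) p) ∧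
    c * ‖g‖ ≤ ‖p‖

section IndividualLowerBound

variable {E : Type*} [NormedAddCommGroup E] [Lattice E] [HasSolidNorm E] [IsOrderedAddMonoid E]
  [NormedSpace ℝ E] {J : Type*} [Preorder J] {T : J → E →L[ℝ] E}

theorem isClosed_setOf_isIndividualLowerBound (T : J → E →L[ℝ] E) (f : E) :
    IsClosed {h | IsIndividualLowerBound T f h} := by
  refine isClosed_of_closure_subset fun h hh => ⟨?_, ?_⟩
  · exact closure_minimal (fun _ hh => hh.1) isClosed_nonneg hh
  refine tendsto_order.2 ⟨fun a ha => Eventually.of_forall fun t => ha.trans_le (norm_nonneg _),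
    fun δ hδ => ?_⟩
  obtain ⟨h', hh', hdist⟩ := Metric.mem_closure_iff.1 hh (δ / 2) (half_pos hδ)
  filter_upwards [hh'.2.eventually (gt_mem_nhds (half_pos hδ))] with t ht
  calc ‖(T t f - h)⁻‖ ≤ ‖(T t f - h')⁻‖ + ‖T t f - h - (T t f - h')‖ := norm_negPart_le_add _ _
    _ < δ / 2 + δ / 2 := by
        rw [sub_sub_sub_cancel_left, ← dist_eq_norm, dist_comm]
        exact add_lt_add ht hdist
    _ = δ := add_halves δ

namespace IsIndividualLowerBound

theorem sup {f h₁ h₂ : E} (h₁lb : IsIndividualLowerBound T f h₁)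
    (h₂lb : IsIndividualLowerBound T f h₂) : IsIndividualLowerBound T f (h₁ ⊔ h₂) := by
  refine ⟨h₁lb.1.trans le_sup_left, squeeze_zero (fun _ => norm_nonneg _) (fun t => ?_)
    (by simpa using h₁lb.2.add h₂lb.2)⟩
  have hle : ∀ h', h' - T t f ≤ (T t f - h')⁻ := fun h' => by
    simpa using neg_le_negPart (T t f - h')
  have key : (T t f - h₁ ⊔ h₂)⁻ ≤ (T t f - h₁)⁻ + (T t f - h₂)⁻ := by
    refine sup_le ?_ (add_nonneg (negPart_nonneg _) (negPart_nonneg _))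
    rw [neg_sub, sup_sub]
    exact sup_le ((hle h₁).trans (le_add_of_nonneg_right (negPart_nonneg _)))
      ((hle h₂).trans (le_add_of_nonneg_left (negPart_nonneg _)))
  exact (norm_le_norm_of_nonneg_of_le (negPart_nonneg _) key).trans (norm_add_le _ _)

theorem smul {f h : E} (hh : IsIndividualLowerBound T f h) {c : ℝ} (hc : 0 < c) :
    IsIndividualLowerBound T (c • f) (c • h) := by
  refine ⟨smul_nonneg hc.le hh.1, ?_⟩
  simpa [← smul_sub, negPart_smul_of_pos hc, norm_smul, abs_of_pos hc] using hh.2.const_mul c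

end IsIndividualLowerBound

end IndividualLowerBound

section Semigroup

variable {E : Type*} [NormedAddCommGroup E] [Lattice E] [NormedSpace ℝ E]
  {J : Type*} [AddCommMonoid J] [LinearOrder J] {T : J → E →L[ℝ] E} {M : ℝ}

namespace IsBoundedPositiveSemigroup

variable (hT : IsBoundedPositiveSemigroup T M)
include hT

theorem norm_apply_le {t : J} (ht : 0 < t) (x : E) : ‖T t x‖ ≤ M * ‖x‖ :=
  (T t).le_of_opNorm_le (hT.norm_le t ht) x

theorem apply_add {s t : J} (hs : 0 < s) (ht : 0 < t) (x : E) : T (s + t) x = T s (T t x) := by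
  rw [hT.map_add s t hs ht, ContinuousLinearMap.comp_apply]

theorem apply_mono [IsOrderedAddMonoid E] {t : J} (ht : 0 < t) {x y : E} (hxy : x ≤ y) :
    T t x ≤ T t y := by
  simpa [sub_nonneg] using hT.map_nonneg t ht _ (sub_nonneg.2 hxy)

theorem antitoneOn_orbit [IsOrderedAddMonoid E] [IsOrderedCancelAddMonoid J] [ExistsAddOfLE J]
    {q : E} (hq : ∀ s, 0 < s → T s q ≤ q) :
    AntitoneOn (fun t => T t q) (Ioi 0) := by
  intro s hs t ht hst
  obtain ⟨u, rfl⟩ := exists_add_of_le hst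
  rcases (le_add_iff_nonneg_right s |>.1 hst).eq_or_lt with rfl | hu
  · rw [add_zero]
  · exact (hT.apply_add hs hu q).trans_le (hT.apply_mono hs (hq u hu))

section NoMaxOrder

variable [NoMaxOrder J]

theorem bound_nonneg : 0 ≤ M :=
  let ⟨t, ht⟩ := exists_gt (0 : J)
  (norm_nonneg _).trans (hT.norm_le t ht)

theorem eventually_nonneg {f : E} (hf : 0 ≤ f) : ∀ᶠ t in atTop, 0 ≤ T t f :=
  (eventually_gt_atTop 0).mono fun t ht => hT.map_nonneg t ht f hf

theorem eventually_norm_apply_le (x : E) : ∀ᶠ t in atTop, ‖T t x‖ ≤ M * ‖x‖ :=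
  (eventually_gt_atTop 0).mono fun _ ht => hT.norm_apply_le ht x

variable [IsOrderedCancelAddMonoid J] [ExistsAddOfLE J]

theorem isFixedPt_of_tendsto {q p : E} (hp : Tendsto (fun t => T t q) atTop (𝓝 p)) {s : J}
    (hs : 0 < s) : IsFixedPt (T s) p := by
  have hshift : Tendsto (fun t => T (s + t) q) atTop (𝓝 p) := by
    rwa [← map_const_add_atTop_eq hs.le, tendsto_map'_iff] at hp
  refine tendsto_nhds_unique (((T s).continuous.tendsto p).comp hp) (hshift.congr' ?_)
  filter_upwards [eventually_gt_atTop 0] with t ht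
  exact hT.apply_add hs ht q

theorem exists_tendsto_of_apply_le [IsOrderedAddMonoid E] [HasSolidNorm E] [CompleteSpace E]
    (hAL : IsALNorm E) {q : E} (hq0 : 0 ≤ q) (hq : ∀ s, 0 < s → T s q ≤ q) :
    ∃ p, Tendsto (fun t => T t q) atTop (𝓝 p) := by
  have : Nonempty (Ioi (0 : J)) := (nonempty_Ioi (a := (0 : J))).to_subtype
  have hcauchy : CauchySeq fun t : Ioi (0 : J) => T t q :=
    hAL.cauchySeq_of_antitone (fun s t hst => hT.antitoneOn_orbit hq s.2 t.2 hst)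
      fun t => hT.map_nonneg t t.2 q hq0
  obtain ⟨p, hp⟩ := cauchySeq_tendsto_of_complete hcauchy
  exact ⟨p, tendsto_comp_val_Ioi_atTop.1 hp⟩

end NoMaxOrder

end IsBoundedPositiveSemigroup

variable [IsOrderedAddMonoid E]

theorem isIndividualLowerBound_zero [NoMaxOrder J] (hT : IsBoundedPositiveSemigroup T M) {f : E}
    (hf : 0 ≤ f) : IsIndividualLowerBound T f 0 := by
  refine ⟨le_rfl, tendsto_const_nhds.congr' ?_⟩
  filter_upwards [hT.eventually_nonneg hf] with t ht
  rw [sub_zero, negPart_eq_zero.2 ht, norm_zero]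

variable [HasSolidNorm E]

namespace IsIndividualLowerBound

theorem apply [NoMaxOrder J] [IsOrderedCancelAddMonoid J] [ExistsAddOfLE J]
    (hT : IsBoundedPositiveSemigroup T M) {f h : E} (hh : IsIndividualLowerBound T f h) {s : J}
    (hs : 0 < s) : IsIndividualLowerBound T f (T s h) := by
  refine ⟨hT.map_nonneg s hs h hh.1, ?_⟩
  rw [← map_const_add_atTop_eq hs.le, tendsto_map'_iff]
  refine squeeze_zero' (Eventually.of_forall fun _ => norm_nonneg _) ?_
    (by simpa using hh.2.const_mul M)
  filter_upwards [eventually_gt_atTop 0] with t ht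
  calc ‖(T (s + t) f - T s h)⁻‖ ≤ ‖T s (T t f - h)⁻‖ := by
        rw [hT.apply_add hs ht, ← map_sub]
        exact norm_le_norm_of_nonneg_of_le (negPart_nonneg _)
          (negPart_map_le (hT.map_nonneg s hs) _)
    _ ≤ M * ‖(T t f - h)⁻‖ := hT.norm_apply_le hs _

theorem norm_le_of_tendsto {f h : E} (hh : IsIndividualLowerBound T f h) {c : ℝ}
    (hc : Tendsto (fun t => ‖T t f‖) atTop (𝓝 c)) : ‖h‖ ≤ c := by
  have := le_of_tendsto_of_tendsto (tendsto_const_nhds.sub hh.2) hc (Eventually.of_forall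
    fun t => sub_le_iff_le_add.2 (norm_le_norm_add_norm_negPart_sub hh.1 (T t f)))
  simpa using this

end IsIndividualLowerBound

theorem norm_le_add_of_eventually {f b : E} (hb : 0 ≤ b) {c d : ℝ}
    (hd : ∀ᶠ t in atTop, ‖(T t f - b)⁻‖ ≤ d) (hc : ∀ᶠ t in atTop, ‖T t f‖ ≤ c) : ‖b‖ ≤ c + d :=
  let ⟨t, htd, htc⟩ := (hd.and hc).exists
  (norm_le_norm_add_norm_negPart_sub hb (T t f)).trans (add_le_add htc htd)

end Semigroup

section FixedLowerBounds

variable {E : Type*} [NormedAddCommGroup E] [Lattice E] [HasSolidNorm E] [IsOrderedAddMonoid E]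
  [NormedSpace ℝ E]
  {J : Type*} [AddCommMonoid J] [LinearOrder J] [NoMaxOrder J] {T : J → E →L[ℝ] E} {M : ℝ}

theorem exists_isIndividualLowerBound_norm_ge (hT : IsBoundedPositiveSemigroup T M) {ε : ℝ}
    (hLB : ∀ f : E, 0 ≤ f → ‖f‖ = 1 → ∃ h, IsIndividualLowerBound T f h ∧ ε ≤ ‖h‖)
    {g : E} (hg : 0 ≤ g) : ∃ h, IsIndividualLowerBound T g h ∧ ε * ‖g‖ ≤ ‖h‖ := by
  rcases hg.eq_or_lt' with rfl | hg'
  · exact ⟨0, isIndividualLowerBound_zero hT le_rfl, by simp⟩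
  have hn : 0 < ‖g‖ := norm_pos_iff.2 hg'.ne'
  obtain ⟨h, hh, hεh⟩ := hLB (‖g‖⁻¹ • g) (smul_nonneg (inv_nonneg.2 hn.le) hg)
    (by rw [norm_smul, norm_inv, norm_norm, inv_mul_cancel₀ hn.ne'])
  refine ⟨‖g‖ • h, by simpa [smul_smul, mul_inv_cancel₀ hn.ne'] using hh.smul hn, ?_⟩
  rw [norm_smul, norm_norm, mul_comm]
  exact mul_le_mul_of_nonneg_left hεh hn.le

theorem exists_isGreatest_isIndividualLowerBound [CompleteSpace E] (hAL : IsALNorm E)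
    (hT : IsBoundedPositiveSemigroup T M) {g : E} (hg : 0 ≤ g) :
    ∃ q, IsGreatest {h | IsIndividualLowerBound T g h} q := by
  refine hAL.exists_isGreatest ⟨0, isIndividualLowerBound_zero hT hg⟩ (fun _ hh => hh.1)
    (fun _ h₁ _ h₂ => h₁.sup h₂) (isClosed_setOf_isIndividualLowerBound T g)
    ⟨M * ‖g‖ + 1, ?_⟩
  rintro _ ⟨h, hh, rfl⟩
  exact norm_le_add_of_eventually hh.1 (hh.2.eventually (ge_mem_nhds one_pos))
    (hT.eventually_norm_apply_le g)

theorem hasFixedLowerBounds_sq [IsOrderedCancelAddMonoid J] [ExistsAddOfLE J] [CompleteSpace E]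
    (hAL : IsALNorm E) (hT : IsBoundedPositiveSemigroup T M) {ε : ℝ} (hε : 0 ≤ ε)
    (hLB : ∀ f : E, 0 ≤ f → ‖f‖ = 1 → ∃ h, IsIndividualLowerBound T f h ∧ ε ≤ ‖h‖) :
    HasFixedLowerBounds T (ε ^ 2) := by
  intro g hg
  obtain ⟨q, hq, hq_max⟩ := exists_isGreatest_isIndividualLowerBound hAL hT hg
  have hTq : ∀ s, 0 < s → T s q ≤ q := fun s hs => hq_max (hq.apply hT hs)
  obtain ⟨p, hp⟩ := hT.exists_tendsto_of_apply_le hAL hq.1 hTq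
  have hp_lb : IsIndividualLowerBound T g p :=
    (isClosed_setOf_isIndividualLowerBound T g).mem_of_tendsto hp
      ((eventually_gt_atTop 0).mono fun t ht => hq.apply hT ht)
  obtain ⟨h, hh, hεh⟩ := exists_isIndividualLowerBound_norm_ge hT hLB hg
  obtain ⟨h', hh', hεh'⟩ := exists_isIndividualLowerBound_norm_ge hT hLB hq.1
  refine ⟨p, hp_lb, fun t ht => hT.isFixedPt_of_tendsto hp ht, ?_⟩
  calc ε ^ 2 * ‖g‖ = ε * (ε * ‖g‖) := by ring
    _ ≤ ε * ‖q‖ := mul_le_mul_of_nonneg_left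
        (hεh.trans (norm_le_norm_of_nonneg_of_le hh.1 (hq_max hh))) hε
    _ ≤ ‖h'‖ := hεh'
    _ ≤ ‖p‖ := hh'.norm_le_of_tendsto hp.norm

end FixedLowerBounds

theorem exists_mem_gt_of_forall_mem_exists_ge {A : ℝ → Set ℝ} {r₀ K c N : ℝ} (hK : 0 < K)
    (hc : 0 < c) (h₀ : ∀ d > 0, r₀ ∈ A d) (hbdd : ∀ d > 0, BddAbove (A d))
    (hmono : ∀ d d', 0 < d → d ≤ d' → A d ⊆ A d')
    (hstep : ∀ d > 0, ∀ r ∈ A d, ∃ r' ∈ A (K * d), r + c * (N - d - r) ≤ r') :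
    ∀ η > 0, ∃ r ∈ A η, N - η < r := by
  -- `S d := sup A d` decreases to some `L` as `d ↓ 0`; in the limit the step reads
  -- `L ≥ L + c (N - L)`.
  set S := fun d => sSup (A d)
  have hS_bdd : BddBelow (S '' Ioi 0) := ⟨r₀, by
    rintro _ ⟨d, hd, rfl⟩
    exact le_csSup (hbdd d hd) (h₀ d hd)⟩
  have hS : Tendsto S (𝓝[>] 0) (𝓝 (sInf (S '' Ioi 0))) :=
    MonotoneOn.tendsto_nhdsGT (fun d hd d' hd' h =>
      csSup_le_csSup (hbdd d' hd') ⟨r₀, h₀ d hd⟩ (hmono d d' hd h)) hS_bdd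
  set L := sInf (S '' Ioi 0)
  suffices hN : N ≤ L by
    intro η hη
    exact exists_lt_of_lt_csSup ⟨r₀, h₀ η hη⟩
      (by linarith [csInf_le hS_bdd (mem_image_of_mem S (mem_Ioi.2 hη))])
  have hnear : ∀ d, ∃ r, 0 < d → r ∈ A d ∧ S d - d < r := fun d => by
    by_cases hd : 0 < d
    · obtain ⟨r, hr, hlt⟩ := exists_lt_of_lt_csSup ⟨r₀, h₀ d hd⟩ (sub_lt_self (S d) hd)
      exact ⟨r, fun _ => ⟨hr, hlt⟩⟩
    · exact ⟨0, fun h => absurd h hd⟩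
  choose r hr using hnear
  have hd0 : Tendsto (fun d : ℝ => d) (𝓝[>] 0) (𝓝 0) := tendsto_id.mono_left nhdsWithin_le_nhds
  have hr_lim : Tendsto r (𝓝[>] 0) (𝓝 L) := by
    refine tendsto_of_tendsto_of_tendsto_of_le_of_le' (by simpa using hS.sub hd0)
      hS ?_ ?_
    all_goals filter_upwards [self_mem_nhdsWithin] with d hd
    · exact (hr d hd).2.le
    · exact le_csSup (hbdd d hd) (hr d hd).1
  have hK_lim : Tendsto (K * ·) (𝓝[>] (0 : ℝ)) (𝓝[>] 0) :=
    tendsto_nhdsWithin_of_tendsto_nhds_of_eventually_within _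
      ((continuous_const_mul K).tendsto' 0 0 (mul_zero K) |>.mono_left nhdsWithin_le_nhds)
      (eventually_nhdsWithin_of_forall fun d hd => mul_pos hK hd)
  have hlhs : Tendsto (fun d => r d + c * (N - d - r d)) (𝓝[>] 0) (𝓝 (L + c * (N - 0 - L))) :=
    hr_lim.add (((tendsto_const_nhds.sub hd0).sub hr_lim).const_mul c)
  have hlim : L + c * (N - 0 - L) ≤ L := by
    refine le_of_tendsto_of_tendsto hlhs (hS.comp hK_lim) ?_
    filter_upwards [self_mem_nhdsWithin] with d hd
    obtain ⟨r', hr', hle⟩ := hstep d hd (r d) (hr d hd).1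
    exact hle.trans (le_csSup (hbdd _ (mul_pos hK hd)) hr')
  nlinarith

section Convergence

variable {E : Type*} [NormedAddCommGroup E] [Lattice E] [HasSolidNorm E] [IsOrderedAddMonoid E]
  [NormedSpace ℝ E]
  {J : Type*} [AddCommMonoid J] [LinearOrder J] [IsOrderedCancelAddMonoid J] [ExistsAddOfLE J]
  [NoMaxOrder J] {T : J → E →L[ℝ] E} {M : ℝ}

theorem eventually_norm_negPart_sub_add_le (hT : IsBoundedPositiveSemigroup T M) {f b p : E}
    (hb : ∀ t, 0 < t → IsFixedPt (T t) b) {s : J} (hs : 0 < s)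
    (hp : IsIndividualLowerBound T (T s f - b)⁺ p) {σ : ℝ} (hσ : 0 < σ) :
    ∀ᶠ t in atTop, ‖(T t f - (b + p))⁻‖ ≤ M * ‖(T s f - b)⁻‖ + σ := by
  rw [← map_const_add_atTop_eq hs.le, eventually_map]
  filter_upwards [eventually_gt_atTop 0, hp.2.eventually (ge_mem_nhds hσ)] with w hw hwσ
  have hsplit : T (s + w) f - (b + p) = (T w (T s f - b)⁺ - p) - T w (T s f - b)⁻ := by
    have hx : T s f = b + ((T s f - b)⁺ - (T s f - b)⁻) := by
      rw [posPart_sub_negPart, add_sub_cancel]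
    rw [add_comm s w, hT.apply_add hw hs]
    nth_rewrite 1 [hx]
    rw [map_add, map_sub, (hb w hw).eq]
    abel
  calc ‖(T (s + w) f - (b + p))⁻‖ ≤ ‖(T w (T s f - b)⁺ - p)⁻ + T w (T s f - b)⁻‖ := by
        rw [hsplit]
        exact norm_le_norm_of_nonneg_of_le (negPart_nonneg _)
          (negPart_sub_le_negPart_add (hT.map_nonneg w hw _ (negPart_nonneg _)))
    _ ≤ σ + M * ‖(T s f - b)⁻‖ := (norm_add_le _ _).trans (add_le_add hwσ (hT.norm_apply_le hw _))
    _ = M * ‖(T s f - b)⁻‖ + σ := add_comm _ _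

theorem exists_fixed_approx_lowerBound_step (hAL : IsALNorm E)
    (hT : IsBoundedPositiveSemigroup T M) {c : ℝ} (hc : 0 ≤ c)
    (hfix : HasFixedLowerBounds T c) {f b : E} (hf : 0 ≤ f) (hb : 0 ≤ b)
    (hbfix : ∀ t, 0 < t → IsFixedPt (T t) b) {d σ r : ℝ}
    (hσ : 0 < σ) (hd : ∀ᶠ t in atTop, ‖(T t f - b)⁻‖ ≤ d) (hr : ∃ᶠ t in atTop, r < ‖T t f‖) :
    ∃ b', 0 ≤ b' ∧ (∀ t, 0 < t → IsFixedPt (T t) b') ∧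
      (∀ᶠ t in atTop, ‖(T t f - b')⁻‖ ≤ M * d + σ) ∧ ‖b‖ + c * (r - ‖b‖) ≤ ‖b'‖ := by
  obtain ⟨s, hsr, hs, hsd⟩ := (hr.and_eventually ((eventually_gt_atTop 0).and hd)).exists
  obtain ⟨p, hp, hpfix, hpn⟩ := hfix _ (posPart_nonneg (T s f - b))
  refine ⟨b + p, add_nonneg hb hp.1,
    fun t ht => by rw [IsFixedPt, map_add, (hbfix t ht).eq, (hpfix t ht).eq], ?_, ?_⟩
  · filter_upwards [eventually_norm_negPart_sub_add_le hT hbfix hs hp hσ] with t ht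
    exact ht.trans (add_le_add (mul_le_mul_of_nonneg_left hsd hT.bound_nonneg) le_rfl)
  · have hu : r - ‖b‖ ≤ ‖(T s f - b)⁺‖ := by
      rw [hAL.norm_posPart_sub (hT.map_nonneg s hs f hf) hb]
      linarith [norm_nonneg (T s f - b)⁻]
    rw [hAL b p hb hp.1]
    linarith [mul_le_mul_of_nonneg_left hu hc]

theorem exists_approx_lowerBound_norm_gt (hAL : IsALNorm E)
    (hT : IsBoundedPositiveSemigroup T M) {c : ℝ} (hc : 0 < c)
    (hfix : HasFixedLowerBounds T c) {f : E} (hf : 0 ≤ f) {N : ℝ}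
    (hN : ∀ σ > 0, ∃ᶠ t in atTop, N - σ < ‖T t f‖) {η : ℝ}
    (hη : 0 < η) : ∃ b, 0 ≤ b ∧ (∀ᶠ t in atTop, ‖(T t f - b)⁻‖ ≤ η) ∧ N - η < ‖b‖ := by
  set F : ℝ → Set E := fun d =>
    {b | 0 ≤ b ∧ (∀ t, 0 < t → IsFixedPt (T t) b) ∧ ∀ᶠ t in atTop, ‖(T t f - b)⁻‖ ≤ d}
  have hF₀ : ∀ d > 0, (0 : E) ∈ F d := fun d hd =>
    ⟨le_rfl, fun t _ => map_zero (T t), (isIndividualLowerBound_zero hT hf).2.eventually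
      (ge_mem_nhds hd)⟩
  obtain ⟨_, ⟨b, hb, rfl⟩, hbN⟩ := exists_mem_gt_of_forall_mem_exists_ge (A := fun d => norm '' F d)
    (K := M + 1) (by linarith [hT.bound_nonneg]) hc (fun d hd => ⟨0, hF₀ d hd, norm_zero⟩)
    (fun d _ => ⟨M * ‖f‖ + d, by
      rintro _ ⟨b, hb, rfl⟩
      exact norm_le_add_of_eventually hb.1 hb.2.2 (hT.eventually_norm_apply_le f)⟩)
    (fun d d' _ hdd' => by
      rintro _ ⟨b, hb, rfl⟩
      exact ⟨b, ⟨hb.1, hb.2.1, hb.2.2.mono fun t ht => ht.trans hdd'⟩, rfl⟩)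
    (fun d hd => by
      rintro _ ⟨b, hb, rfl⟩
      obtain ⟨b', hb'0, hb'fix, hb'd, hb'n⟩ := exists_fixed_approx_lowerBound_step hAL hT hc.le
        hfix hf hb.1 hb.2.1 hd hb.2.2 (hN d hd)
      exact ⟨‖b'‖, ⟨b', ⟨hb'0, hb'fix, by rwa [add_one_mul]⟩, rfl⟩, hb'n⟩) η hη
  exact ⟨b, hb.1, hb.2.2, hbN⟩

theorem exists_tendsto_of_nonneg [CompleteSpace E] (hAL : IsALNorm E)
    (hT : IsBoundedPositiveSemigroup T M) {c : ℝ} (hc : 0 < c)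
    (hfix : HasFixedLowerBounds T c) {f : E} (hf : 0 ≤ f) :
    ∃ y, Tendsto (fun t => T t f) atTop (𝓝 y) := by
  set N := limsup (fun t => ‖T t f‖) atTop
  have hbdd : IsBoundedUnder (· ≤ ·) atTop (fun t => ‖T t f‖) :=
    isBoundedUnder_of_eventually_le (hT.eventually_norm_apply_le f)
  have hcob : IsCoboundedUnder (· ≤ ·) atTop (fun t => ‖T t f‖) :=
    isCoboundedUnder_le_of_le atTop fun t => norm_nonneg _
  have hlow : ∀ σ > 0, ∃ᶠ t in atTop, N - σ < ‖T t f‖ :=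
    fun σ hσ => frequently_lt_of_lt_limsup hcob (sub_lt_self N hσ)
  refine cauchySeq_tendsto_of_complete (Metric.cauchySeq_iff'.2 fun δ hδ => ?_)
  obtain ⟨b, hb, hbd, hbN⟩ := exists_approx_lowerBound_norm_gt hAL hT hc hfix hf hlow
    (show 0 < δ / 8 by positivity)
  have hclose : ∀ᶠ t in atTop, dist (T t f) b < δ / 2 := by
    filter_upwards [hbd, eventually_lt_of_limsup_lt (lt_add_of_pos_right N
      (show 0 < δ / 8 by positivity)) hbdd, hT.eventually_nonneg hf] with t h1 h2 h3
    rw [dist_eq_norm, hAL.norm_sub h3 hb]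
    linarith
  obtain ⟨t₀, ht₀⟩ := eventually_atTop.1 hclose
  refine ⟨t₀, fun t ht => ?_⟩
  calc dist (T t f) (T t₀ f) ≤ dist (T t f) b + dist (T t₀ f) b := dist_triangle_right _ _ _
    _ < δ / 2 + δ / 2 := add_lt_add (ht₀ t ht) (ht₀ t₀ le_rfl)
    _ = δ := add_halves δ

end Convergence

theorem exists_continuousLinearMap_tendsto {𝕜 E F α : Type*} [NontriviallyNormedField 𝕜]
    [SeminormedAddCommGroup E] [NormedSpace 𝕜 E] [NormedAddCommGroup F] [NormedSpace 𝕜 F]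
    {l : Filter α} [l.NeBot] {T : α → E →L[𝕜] F} {M : ℝ} (hM : ∀ᶠ a in l, ‖T a‖ ≤ M)
    (h : ∀ x, ∃ y, Tendsto (fun a => T a x) l (𝓝 y)) :
    ∃ P : E →L[𝕜] F, ∀ x, Tendsto (fun a => T a x) l (𝓝 (P x)) := by
  choose P hP using h
  let P' := linearMapOfTendsto P (fun a => (T a : E →ₗ[𝕜] F)) (tendsto_pi_nhds.2 hP)
  refine ⟨P'.mkContinuous M fun x => le_of_tendsto (hP x).norm ?_, hP⟩
  filter_upwards [hM] with a ha
  exact (T a).le_of_opNorm_le ha x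

section Main

variable {E : Type*} [NormedAddCommGroup E] [Lattice E] [HasSolidNorm E] [IsOrderedAddMonoid E]
  [NormedSpace ℝ E] [CompleteSpace E]
  {J : Type*} [AddCommMonoid J] [LinearOrder J] [IsOrderedCancelAddMonoid J] [ExistsAddOfLE J]
  [NoMaxOrder J] {T : J → E →L[ℝ] E} {M : ℝ}

theorem IsBoundedPositiveSemigroup.exists_tendsto_iff (hAL : IsALNorm E)
    (hT : IsBoundedPositiveSemigroup T M) {ε : ℝ} (hε : 0 < ε) :
    (∃ P : E →L[ℝ] E, (∀ f, Tendsto (fun t => T t f) atTop (𝓝 (P f))) ∧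
        ∀ f, 0 ≤ f → ε * ‖f‖ ≤ ‖P f‖) ↔
      ∀ f : E, 0 ≤ f → ‖f‖ = 1 → ∃ h, 0 ≤ h ∧ ε ≤ ‖h‖ ∧
        Tendsto (fun t => ‖(T t f - h)⁻‖) atTop (𝓝 0) := by
  constructor
  · rintro ⟨P, hP, hPε⟩ f hf hf1
    refine ⟨P f, ge_of_tendsto (hP f) (hT.eventually_nonneg hf), by simpa [hf1] using hPε f hf,
      squeeze_zero (fun _ => norm_nonneg _) (fun t => norm_negPart_le _) ?_⟩
    exact tendsto_iff_norm_sub_tendsto_zero.1 (hP f)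
  · intro hLB
    replace hLB : ∀ f : E, 0 ≤ f → ‖f‖ = 1 → ∃ h, IsIndividualLowerBound T f h ∧ ε ≤ ‖h‖ :=
      fun f hf hf1 => let ⟨h, hh, hεh, hlim⟩ := hLB f hf hf1; ⟨h, ⟨hh, hlim⟩, hεh⟩
    have hpos : ∀ f : E, 0 ≤ f → ∃ y, Tendsto (fun t => T t f) atTop (𝓝 y) :=
      fun f hf => exists_tendsto_of_nonneg hAL hT (pow_pos hε 2)
        (hasFixedLowerBounds_sq hAL hT hε.le hLB) hf
    obtain ⟨P, hP⟩ := exists_continuousLinearMap_tendsto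
      ((eventually_gt_atTop 0).mono fun t ht => hT.norm_le t ht) fun x => by
        obtain ⟨y₁, hy₁⟩ := hpos _ (posPart_nonneg x)
        obtain ⟨y₂, hy₂⟩ := hpos _ (negPart_nonneg x)
        exact ⟨y₁ - y₂, by simpa [← map_sub, posPart_sub_negPart] using hy₁.sub hy₂⟩
    refine ⟨P, hP, fun f hf => ?_⟩
    obtain ⟨h, hh, hεh⟩ := exists_isIndividualLowerBound_norm_ge hT hLB hf
    exact hεh.trans (hh.norm_le_of_tendsto (hP f).norm)

end Main

theorem isBoundedPositiveSemigroup_pow {E : Type*} [NormedAddCommGroup E] [Lattice E]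
    [NormedSpace ℝ E] {S : E →L[ℝ] E} (hS : ∀ f, 0 ≤ f → 0 ≤ S f) {M : ℝ}
    (hM : ∀ n : ℕ, ‖S ^ n‖ ≤ M) : IsBoundedPositiveSemigroup (fun n : ℕ => S ^ n) M where
  map_add s t _ _ := pow_add S s t
  map_nonneg t ht := by
    clear ht
    induction t with
    | zero => simp
    | succ n ih =>
      rw [pow_succ']
      exact fun f hf => hS _ (ih f hf)
  norm_le t _ := hM t

/-- For a bounded positive semigroup on an AL-space and `ε > 0`: the semigroup converges
strongly to an operator `P` with `‖Pf‖ ≥ ε ‖f‖` for all positive `f` if and only if every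
normalised positive vector `f` admits an individual lower bound `h_f` with `‖h_f‖ ≥ ε`.
Both the time-discrete case `J = ℕ` and the case `J = (0,∞)` are covered. -/
theorem bounded_semigroup_convergence_iff_individual_lower_bounds
    {E : Type*} [NormedAddCommGroup E] [Lattice E] [HasSolidNorm E] [IsOrderedAddMonoid E]
    [NormedSpace ℝ E] [CompleteSpace E]
    (hAL : ∀ f g : E, 0 ≤ f → 0 ≤ g → ‖f + g‖ = ‖f‖ + ‖g‖)
    (ε : ℝ) (hε : 0 < ε) :
    -- the time-discrete case `J = ℕ`
    (∀ S : E →L[ℝ] E,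
      (∀ f : E, 0 ≤ f → 0 ≤ S f) → (∃ M : ℝ, ∀ n : ℕ, ‖S ^ n‖ ≤ M) →
      ((∃ P : E →L[ℝ] E,
          (∀ f : E, Tendsto (fun n : ℕ => (S ^ n) f) atTop (𝓝 (P f))) ∧
          (∀ f : E, 0 ≤ f → ε * ‖f‖ ≤ ‖P f‖)) ↔
        (∀ f : E, 0 ≤ f → ‖f‖ = 1 →
          ∃ h : E, 0 ≤ h ∧ ε ≤ ‖h‖ ∧
            Tendsto (fun n : ℕ => ‖((S ^ n) f - h)⁻‖) atTop (𝓝 0)))) ∧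
    -- the case `J = (0, ∞)`
    (∀ T : ℝ → E →L[ℝ] E,
      (∀ s t : ℝ, 0 < s → 0 < t → T (s + t) = (T s).comp (T t)) →
      (∀ t : ℝ, 0 < t → ∀ f : E, 0 ≤ f → 0 ≤ T t f) →
      (∃ M : ℝ, ∀ t : ℝ, 0 < t → ‖T t‖ ≤ M) →
      ((∃ P : E →L[ℝ] E,
          (∀ f : E, Tendsto (fun t : ℝ => T t f) atTop (𝓝 (P f))) ∧
          (∀ f : E, 0 ≤ f → ε * ‖f‖ ≤ ‖P f‖)) ↔
        (∀ f : E, 0 ≤ f → ‖f‖ = 1 →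
          ∃ h : E, 0 ≤ h ∧ ε ≤ ‖h‖ ∧
            Tendsto (fun t : ℝ => ‖(T t f - h)⁻‖) atTop (𝓝 0)))) :=
  ⟨fun _ hS ⟨_, hM⟩ => (isBoundedPositiveSemigroup_pow hS hM).exists_tendsto_iff hAL hε,
    fun _ hadd hpos ⟨_, hM⟩ =>
      IsBoundedPositiveSemigroup.exists_tendsto_iff hAL ⟨hadd, hpos, hM⟩ hε⟩
end

section
/- Let E be a Banach lattice and (T_t)_{t∈J} a semigroup on E (J = ℕ or (0,∞)) consisting of lattice homomorphisms. If (T_t) converges strongly to an operator P satisfying Pf > 0 for all f > 0, then T_t = id_E for all t ∈ J. -/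
/-!
Strong limits preserve suprema, so `P` is a lattice homomorphism; being strictly positive, it is
then injective, since `P h = 0` forces `P |h| = |P h| = 0` and hence `|h| = 0`. The semigroup
law gives `P ∘ T t = P`, so `P (f - T t f) = 0`, and injectivity yields `T t f = f`.
-/

open Filter Topology

section LatticeHom

variable {E F 𝓕 : Type*} [AddCommGroup E] [Lattice E] [AddCommGroup F] [Lattice F]
  [FunLike 𝓕 E F] [AddMonoidHomClass 𝓕 E F]

theorem abs_pos_of_ne_zero' [IsOrderedAddMonoid E] {a : E} (ha : a ≠ 0) : 0 < |a| := by
  refine (abs_nonneg a).lt_of_ne fun h => ha (le_antisymm ?_ ?_)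
  · exact h ▸ le_abs_self a
  · exact neg_nonpos.mp (h ▸ neg_le_abs a)

theorem map_abs_of_map_sup (T : 𝓕) (hT : ∀ f g, T (f ⊔ g) = T f ⊔ T g) (a : E) :
    T |a| = |T a| := by
  rw [abs, abs, hT, map_neg]

theorem injective_of_map_sup_of_map_pos [IsOrderedAddMonoid E] [IsOrderedAddMonoid F] (T : 𝓕)
    (hT : ∀ f g, T (f ⊔ g) = T f ⊔ T g)
    (hpos : ∀ f, 0 < f → 0 < T f) : Function.Injective T := by
  refine (injective_iff_map_eq_zero T).mpr fun a ha => ?_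
  by_contra hne
  have h := hpos _ (abs_pos_of_ne_zero' hne)
  rw [map_abs_of_map_sup T hT, ha, abs_zero] at h
  exact h.false

end LatticeHom

section StrongLimit

variable {ι X Y : Type*} [TopologicalSpace Y] [T2Space Y] {l : Filter ι} [l.NeBot]
  {T : ι → X → Y} {P : X → Y}

theorem map_sup_of_tendsto [Lattice X] [Lattice Y] [ContinuousSup Y]
    (hT : ∀ᶠ i in l, ∀ f g, T i (f ⊔ g) = T i f ⊔ T i g)
    (hP : ∀ f, Tendsto (fun i => T i f) l (𝓝 (P f))) (f g : X) :
    P (f ⊔ g) = P f ⊔ P g := by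
  refine tendsto_nhds_unique (hP (f ⊔ g)) (((hP f).sup_nhds (hP g)).congr' ?_)
  filter_upwards [hT] with i hi
  exact (hi f g).symm

theorem apply_comp_eq_of_tendsto {A : X → X} {φ : ι → ι} (hφ : Tendsto φ l l)
    (hA : ∀ᶠ i in l, ∀ f, T (φ i) f = T i (A f))
    (hP : ∀ f, Tendsto (fun i => T i f) l (𝓝 (P f))) (f : X) : P (A f) = P f := by
  refine tendsto_nhds_unique (hP (A f)) (((hP f).comp hφ).congr' ?_)
  filter_upwards [hA] with i hi
  exact hi f

end StrongLimit

theorem eq_self_of_tendsto_latticeHom {E 𝓕 ι : Type*} [AddCommGroup E] [Lattice E]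
    [IsOrderedAddMonoid E] [TopologicalSpace E] [T2Space E] [ContinuousSup E]
    [FunLike 𝓕 E E] [AddMonoidHomClass 𝓕 E E] {l : Filter ι} [l.NeBot]
    {T : ι → 𝓕} {P A : 𝓕} {φ : ι → ι}
    (hT : ∀ᶠ i in l, ∀ f g, T i (f ⊔ g) = T i f ⊔ T i g)
    (hP : ∀ f, Tendsto (fun i => T i f) l (𝓝 (P f))) (hpos : ∀ f, 0 < f → 0 < P f)
    (hφ : Tendsto φ l l) (hA : ∀ᶠ i in l, ∀ f, T (φ i) f = T i (A f)) (f : E) :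
    A f = f :=
  injective_of_map_sup_of_map_pos P (map_sup_of_tendsto hT hP) hpos
    (apply_comp_eq_of_tendsto hφ hA hP f)

theorem semigroup_of_latticeHoms_is_identity_general
    {E : Type*} [NormedAddCommGroup E] [Lattice E] [HasSolidNorm E]
      [IsOrderedAddMonoid E] [NormedSpace ℝ E] :
    -- the time-discrete case `J = ℕ`
    (∀ S : E →L[ℝ] E,
      (∀ f g : E, S (f ⊔ g) = S f ⊔ S g) →
      (∀ P : E →L[ℝ] E,
        (∀ f : E, Tendsto (fun n : ℕ => (S ^ n) f) atTop (𝓝 (P f))) →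
        (∀ f : E, 0 < f → 0 < P f) →
        S = ContinuousLinearMap.id ℝ E)) ∧
    -- the case `J = (0, ∞)`
    (∀ T : ℝ → E →L[ℝ] E,
      (∀ s t : ℝ, 0 < s → 0 < t → T (s + t) = (T s).comp (T t)) →
      (∀ t : ℝ, 0 < t → ∀ f g : E, T t (f ⊔ g) = T t f ⊔ T t g) →
      (∀ P : E →L[ℝ] E,
        (∀ f : E, Tendsto (fun t : ℝ => T t f) atTop (𝓝 (P f))) →
        (∀ f : E, 0 < f → 0 < P f) →
        ∀ t : ℝ, 0 < t → T t = ContinuousLinearMap.id ℝ E)) := by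
  constructor
  · intro S hS P hP hpos
    have hpow : ∀ n : ℕ, ∀ f g, (S ^ n) (f ⊔ g) = (S ^ n) f ⊔ (S ^ n) g := by
      intro n
      induction n with
      | zero => simp
      | succ n ih =>
        intro f g
        show (S ^ n) (S (f ⊔ g)) = (S ^ n) (S f) ⊔ (S ^ n) (S g)
        rw [hS, ih]
    ext f
    exact eq_self_of_tendsto_latticeHom (.of_forall hpow) hP hpos (tendsto_add_atTop_nat 1)
      (.of_forall fun n f => by rw [pow_succ]; rfl) f
  · intro T hT hTlat P hP hpos t ht
    ext f
    exact eq_self_of_tendsto_latticeHom ((eventually_gt_atTop 0).mono hTlat) hP hpos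
      (tendsto_atTop_add_const_right _ t tendsto_id)
      ((eventually_gt_atTop 0).mono fun s hs f => by
        simp only [id, hT s t hs ht, ContinuousLinearMap.comp_apply]) f

/-- If a semigroup of lattice homomorphisms on a Banach lattice converges strongly to an
operator `P` with `Pf > 0` for every `f > 0`, then every semigroup operator is the
identity.  Both the time-discrete case `J = ℕ` and the case `J = (0,∞)` are covered. -/
theorem semigroup_of_latticeHoms_is_identity
    {E : Type*} [NormedAddCommGroup E] [Lattice E] [HasSolidNorm E]
      [IsOrderedAddMonoid E] [NormedSpace ℝ E] [CompleteSpace E] :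
    -- the time-discrete case `J = ℕ`
    (∀ S : E →L[ℝ] E,
      (∀ f g : E, S (f ⊔ g) = S f ⊔ S g) →
      (∀ P : E →L[ℝ] E,
        (∀ f : E, Tendsto (fun n : ℕ => (S ^ n) f) atTop (𝓝 (P f))) →
        (∀ f : E, 0 < f → 0 < P f) →
        S = ContinuousLinearMap.id ℝ E)) ∧
    -- the case `J = (0, ∞)`
    (∀ T : ℝ → E →L[ℝ] E,
      (∀ s t : ℝ, 0 < s → 0 < t → T (s + t) = (T s).comp (T t)) →
      (∀ t : ℝ, 0 < t → ∀ f g : E, T t (f ⊔ g) = T t f ⊔ T t g) →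
      (∀ P : E →L[ℝ] E,
        (∀ f : E, Tendsto (fun t : ℝ => T t f) atTop (𝓝 (P f))) →
        (∀ f : E, 0 < f → 0 < P f) →
        ∀ t : ℝ, 0 < t → T t = ContinuousLinearMap.id ℝ E)) :=
  semigroup_of_latticeHoms_is_identity_general
end

section
/- Let (Ω,μ) be a finite measure space, J = ℕ or (0,∞), and for each t ∈ J let φ_t: Ω → Ω be measurable and measure-preserving with φ_{t+s} = φ_t ∘ φ_s. Let T_t be the Frobenius–Perron operator on L¹(Ω,μ) associated with φ_t. If (T_t)_{t∈J} converges in operator norm as t → ∞, then T_t = id for all t ∈ J. -/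
/-!
Write `T t → P` in operator norm. Since `T (s + t) = T s * T t`, letting `s → ∞` gives
`P * T t = P`. Each `T t` has the Koopman operator `K = (· ∘ φ t)` as a right inverse of norm
at most one, so `P * K = P * T t * K = P` and `1 - P = (T t - P) * K`; hence
`‖1 - P‖ ≤ ‖T t - P‖ → 0`, i.e. `P = 1`, and then `T t = P * T t = P = 1`.
-/

open Filter Topology MeasureTheory

section NormedRing

variable {R : Type*} [NormedRing R]

theorem norm_one_sub_le_of_mul_eq_of_mul_eq_one {P a K : R} (hPa : P * a = P)
    (haK : a * K = 1) (hK : ‖K‖ ≤ 1) : ‖1 - P‖ ≤ ‖a - P‖ := by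
  have hPK : P * K = P := by nth_rewrite 1 [← hPa]; rw [mul_assoc, haK, mul_one]
  calc ‖1 - P‖ = ‖(a - P) * K‖ := by rw [sub_mul, haK, hPK]
    _ ≤ ‖a - P‖ * ‖K‖ := norm_mul_le _ _
    _ ≤ ‖a - P‖ := mul_le_of_le_one_right (norm_nonneg _) hK

variable {ι : Type*} [Add ι] {l : Filter ι} [l.NeBot] {S : Set ι} {T : ι → R} {P : R}

theorem mul_eq_of_tendsto_of_map_add {t : ι} (hT : Tendsto T l (𝓝 P))
    (hS : ∀ᶠ s in l, s ∈ S) (hshift : Tendsto (· + t) l l)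
    (hmul : ∀ s ∈ S, T (s + t) = T s * T t) : P * T t = P := by
  have hshifted : Tendsto (fun s => T s * T t) l (𝓝 P) :=
    (hT.comp hshift).congr' (hS.mono fun s hs => hmul s hs)
  exact tendsto_nhds_unique (hT.mul_const (T t)) hshifted

theorem eq_one_of_tendsto_of_map_add (hT : Tendsto T l (𝓝 P)) (hS : ∀ᶠ s in l, s ∈ S)
    (hshift : ∀ t ∈ S, Tendsto (· + t) l l)
    (hmul : ∀ s ∈ S, ∀ t ∈ S, T (s + t) = T s * T t)
    (hinv : ∀ t ∈ S, ∃ K : R, ‖K‖ ≤ 1 ∧ T t * K = 1) :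
    ∀ t ∈ S, T t = 1 := by
  have hPT : ∀ t ∈ S, P * T t = P := fun t ht =>
    mul_eq_of_tendsto_of_map_add hT hS (hshift t ht) fun s hs => hmul s hs t ht
  have hP : P = 1 := by
    have hbound : ∀ᶠ t in l, ‖1 - P‖ ≤ ‖T t - P‖ := hS.mono fun t ht => by
      obtain ⟨K, hK, hTK⟩ := hinv t ht
      exact norm_one_sub_le_of_mul_eq_of_mul_eq_one (hPT t ht) hTK hK
    have hzero : ‖1 - P‖ ≤ 0 := ge_of_tendsto (tendsto_iff_norm_sub_tendsto_zero.mp hT) hbound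
    exact (sub_eq_zero.mp (norm_le_zero_iff.mp hzero)).symm
  intro t ht
  simpa only [hP, one_mul] using hPT t ht

end NormedRing

namespace MeasureTheory

variable {Ω : Type*} [MeasurableSpace Ω] {μ : Measure Ω}

def IsFrobeniusPerron (μ : Measure Ω) (φ : Ω → Ω) (T : Lp ℝ 1 μ →L[ℝ] Lp ℝ 1 μ) : Prop :=
  ∀ f : Lp ℝ 1 μ, ∀ A : Set Ω, MeasurableSet A →
    ∫ x in A, (T f : Ω → ℝ) x ∂μ = ∫ x in φ ⁻¹' A, (f : Ω → ℝ) x ∂μ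

theorem L1.ext_of_forall_setIntegral_eq {f g : Lp ℝ 1 μ}
    (h : ∀ A : Set Ω, MeasurableSet A →
      ∫ x in A, (f : Ω → ℝ) x ∂μ = ∫ x in A, (g : Ω → ℝ) x ∂μ) : f = g :=
  Lp.ext <| Lp.ae_eq_of_forall_setIntegral_eq f g one_ne_zero ENNReal.one_ne_top
    (fun _ _ _ => (L1.integrable_coeFn f).integrableOn)
    (fun _ _ _ => (L1.integrable_coeFn g).integrableOn) fun A hA _ => h A hA

namespace IsFrobeniusPerron

variable {φ ψ : Ω → Ω} {T S : Lp ℝ 1 μ →L[ℝ] Lp ℝ 1 μ}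

theorem unique (hT : IsFrobeniusPerron μ φ T) (hS : IsFrobeniusPerron μ φ S) : T = S :=
  ContinuousLinearMap.ext fun f =>
    L1.ext_of_forall_setIntegral_eq fun A hA => (hT f A hA).trans (hS f A hA).symm

theorem comp (hT : IsFrobeniusPerron μ φ T) (hS : IsFrobeniusPerron μ ψ S)
    (hφ : Measurable φ) : IsFrobeniusPerron μ (φ ∘ ψ) (T * S) := fun f A hA => by
  rw [mul_apply_eq_comp, hT _ A hA, hS f _ (hφ hA), Set.preimage_comp]

theorem mul_koopman_eq_one (hT : IsFrobeniusPerron μ φ T) (hφ : MeasurePreserving φ μ μ) :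
    T * (Lp.compMeasurePreservingₗᵢ ℝ φ hφ).toContinuousLinearMap = 1 := by
  refine ContinuousLinearMap.ext fun f => L1.ext_of_forall_setIntegral_eq fun A hA => ?_
  have hkoopman : (Lp.compMeasurePreserving φ hφ f : Ω → ℝ) =ᵐ[μ] (f : Ω → ℝ) ∘ φ :=
    Lp.coeFn_compMeasurePreserving f hφ
  calc ∫ x in A, (T (Lp.compMeasurePreserving φ hφ f) : Ω → ℝ) x ∂μ
      = ∫ x in φ ⁻¹' A, (f : Ω → ℝ) (φ x) ∂μ :=
        (hT _ A hA).trans (setIntegral_congr_ae (hφ.measurable hA) (hkoopman.mono fun _ h _ => h))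
    _ = ∫ x in A, (f : Ω → ℝ) x ∂μ := by
        have hf : AEStronglyMeasurable (f : Ω → ℝ) (μ.map φ) :=
          hφ.map_eq.symm ▸ Lp.aestronglyMeasurable f
        have hchange := setIntegral_map hA hf hφ.aemeasurable
        rw [hφ.map_eq] at hchange
        exact hchange.symm

end IsFrobeniusPerron

theorem IsFrobeniusPerron.eq_one_of_tendsto {ι : Type*} [Add ι] {l : Filter ι} [l.NeBot]
    {S : Set ι} {φ : ι → Ω → Ω} {T : ι → Lp ℝ 1 μ →L[ℝ] Lp ℝ 1 μ}
    {P : Lp ℝ 1 μ →L[ℝ] Lp ℝ 1 μ} (hT : Tendsto T l (𝓝 P)) (hS : ∀ᶠ s in l, s ∈ S)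
    (hshift : ∀ t ∈ S, Tendsto (· + t) l l) (hφ : ∀ t ∈ S, MeasurePreserving (φ t) μ μ)
    (hφ_add : ∀ s ∈ S, ∀ t ∈ S, φ (s + t) = φ s ∘ φ t) (hSadd : ∀ s ∈ S, ∀ t ∈ S, s + t ∈ S)
    (hFP : ∀ t ∈ S, IsFrobeniusPerron μ (φ t) (T t)) :
    ∀ t ∈ S, T t = 1 := by
  refine eq_one_of_tendsto_of_map_add hT hS hshift (fun s hs t ht => ?_) fun t ht => ?_
  · refine (hFP _ (hSadd s hs t ht)).unique ?_
    rw [hφ_add s hs t ht]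
    exact (hFP s hs).comp (hFP t ht) (hφ s hs).measurable
  · exact ⟨_, LinearIsometry.norm_toContinuousLinearMap_le _,
      (hFP t ht).mul_koopman_eq_one (hφ t ht)⟩

end MeasureTheory

theorem frobenius_perron_norm_convergence_implies_identity_general
    {Ω : Type*} [MeasurableSpace Ω] (μ : Measure Ω) :
    -- the time-discrete case `J = ℕ`
    (∀ (φ : ℕ → Ω → Ω) (T : ℕ → Lp ℝ 1 μ →L[ℝ] Lp ℝ 1 μ),
      (∀ t : ℕ, 1 ≤ t → MeasurePreserving (φ t) μ μ) →
      (∀ s t : ℕ, 1 ≤ s → 1 ≤ t → φ (t + s) = φ t ∘ φ s) →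
      (∀ t : ℕ, 1 ≤ t → ∀ f : Lp ℝ 1 μ, ∀ A : Set Ω, MeasurableSet A →
        ∫ x in A, (T t f : Ω → ℝ) x ∂μ = ∫ x in (φ t) ⁻¹' A, (f : Ω → ℝ) x ∂μ) →
      (∃ P : Lp ℝ 1 μ →L[ℝ] Lp ℝ 1 μ,
        Tendsto (fun t : ℕ => ‖T t - P‖) atTop (𝓝 0)) →
      ∀ t : ℕ, 1 ≤ t → T t = ContinuousLinearMap.id ℝ (Lp ℝ 1 μ)) ∧
    -- the case `J = (0, ∞)`
    (∀ (φ : ℝ → Ω → Ω) (T : ℝ → Lp ℝ 1 μ →L[ℝ] Lp ℝ 1 μ),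
      (∀ t : ℝ, 0 < t → MeasurePreserving (φ t) μ μ) →
      (∀ s t : ℝ, 0 < s → 0 < t → φ (t + s) = φ t ∘ φ s) →
      (∀ t : ℝ, 0 < t → ∀ f : Lp ℝ 1 μ, ∀ A : Set Ω, MeasurableSet A →
        ∫ x in A, (T t f : Ω → ℝ) x ∂μ = ∫ x in (φ t) ⁻¹' A, (f : Ω → ℝ) x ∂μ) →
      (∃ P : Lp ℝ 1 μ →L[ℝ] Lp ℝ 1 μ,
        Tendsto (fun t : ℝ => ‖T t - P‖) atTop (𝓝 0)) →
      ∀ t : ℝ, 0 < t → T t = ContinuousLinearMap.id ℝ (Lp ℝ 1 μ)) := by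
  constructor
  · rintro φ T hφ hφ_add hFP ⟨P, hP⟩
    exact IsFrobeniusPerron.eq_one_of_tendsto (S := Set.Ici 1)
      (tendsto_iff_norm_sub_tendsto_zero.mpr hP) (eventually_ge_atTop 1)
      (fun t _ => tendsto_add_atTop_nat t) hφ
      (fun s hs t ht => hφ_add t s ht hs) (fun s hs _ _ => Set.mem_Ici.2 (le_add_right hs)) hFP
  · rintro φ T hφ hφ_add hFP ⟨P, hP⟩
    exact IsFrobeniusPerron.eq_one_of_tendsto (S := Set.Ioi 0)
      (tendsto_iff_norm_sub_tendsto_zero.mpr hP) (eventually_gt_atTop 0)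
      (fun t _ => tendsto_atTop_add_const_right _ t tendsto_id) hφ
      (fun s hs t ht => hφ_add t s ht hs) (fun s hs t ht => Set.mem_Ioi.2 (add_pos hs ht)) hFP

/-- Let `(Ω, μ)` be a finite measure space and `(φ_t)_{t∈J}` a semigroup of
measure-preserving measurable maps, with associated Frobenius–Perron operators `T_t` on
`L¹(Ω, μ)` (characterised by `∫_A T_t f dμ = ∫_{φ_t⁻¹(A)} f dμ`).  If `(T_t)` converges
in operator norm as `t → ∞`, then `T_t = id` for all `t`.  Both the time-discrete case
`J = ℕ` and the case `J = (0,∞)` are covered. -/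
theorem frobenius_perron_norm_convergence_implies_identity
    {Ω : Type*} [MeasurableSpace Ω] (μ : Measure Ω) [IsFiniteMeasure μ] :
    -- the time-discrete case `J = ℕ`
    (∀ (φ : ℕ → Ω → Ω) (T : ℕ → Lp ℝ 1 μ →L[ℝ] Lp ℝ 1 μ),
      (∀ t : ℕ, 1 ≤ t → MeasurePreserving (φ t) μ μ) →
      (∀ s t : ℕ, 1 ≤ s → 1 ≤ t → φ (t + s) = φ t ∘ φ s) →
      (∀ t : ℕ, 1 ≤ t → ∀ f : Lp ℝ 1 μ, ∀ A : Set Ω, MeasurableSet A →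
        ∫ x in A, (T t f : Ω → ℝ) x ∂μ = ∫ x in (φ t) ⁻¹' A, (f : Ω → ℝ) x ∂μ) →
      (∃ P : Lp ℝ 1 μ →L[ℝ] Lp ℝ 1 μ,
        Tendsto (fun t : ℕ => ‖T t - P‖) atTop (𝓝 0)) →
      ∀ t : ℕ, 1 ≤ t → T t = ContinuousLinearMap.id ℝ (Lp ℝ 1 μ)) ∧
    -- the case `J = (0, ∞)`
    (∀ (φ : ℝ → Ω → Ω) (T : ℝ → Lp ℝ 1 μ →L[ℝ] Lp ℝ 1 μ),
      (∀ t : ℝ, 0 < t → MeasurePreserving (φ t) μ μ) →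
      (∀ s t : ℝ, 0 < s → 0 < t → φ (t + s) = φ t ∘ φ s) →
      (∀ t : ℝ, 0 < t → ∀ f : Lp ℝ 1 μ, ∀ A : Set Ω, MeasurableSet A →
        ∫ x in A, (T t f : Ω → ℝ) x ∂μ = ∫ x in (φ t) ⁻¹' A, (f : Ω → ℝ) x ∂μ) →
      (∃ P : Lp ℝ 1 μ →L[ℝ] Lp ℝ 1 μ,
        Tendsto (fun t : ℝ => ‖T t - P‖) atTop (𝓝 0)) →
      ∀ t : ℝ, 0 < t → T t = ContinuousLinearMap.id ℝ (Lp ℝ 1 μ)) :=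
  frobenius_perron_norm_convergence_implies_identity_general μ
end
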